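/- The sparse grid spaces generated by nodal hierarchical functions and by pre-wavelets coincide: span{v^{lin}_{t,i} : |t| ≤ n, i ∈ Ξ_t} = span{φ_{t,i} : |t| ≤ n, i ∈ Ξ_t}. -/
import Mathlib


open MeasureTheory

noncomputable def hat (t i : ℕ) (x : ℝ) : ℝ :=
  max 0 (1 - |x * 2 ^ (t + 1) - (i : ℝ)|)

def Idx (t : ℕ) : Finset ℕ := Finset.Icc 1 (2 ^ (t + 1) - 1)

def Xi (t : ℕ) : Finset ℕ := if t = 0 then {1} else (Idx t).filter (fun i => Odd i)

noncomputable def prew (t i : ℕ) (x : ℝ) : ℝ :=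
  if t = 0 then hat 0 1 x
  else if i = 1 then 9/10 * hat t 1 x - 3/5 * hat t 2 x + 1/10 * hat t 3 x
  else if i = 2 ^ (t + 1) - 1 then
    9/10 * hat t i x - 3/5 * hat t (i-1) x + 1/10 * hat t (i-2) x
  else hat t i x - 3/5 * (hat t (i+1) x + hat t (i-1) x)
    + 1/10 * (hat t (i+2) x + hat t (i-2) x)

/-- Tensor product pre-wavelet `φ_{t,i}(x) = ∏_s φ_{t_s,i_s}(x_s)`. -/
noncomputable def tprew (d : ℕ) (t i : Fin d → ℕ) (x : Fin d → ℝ) : ℝ :=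
  ∏ s, prew (t s) (i s) (x s)

/-- Tensor product hat function `v^{lin}_{t,i}(x) = ∏_s v_{t_s,i_s}(x_s)`. -/
noncomputable def that (d : ℕ) (t i : Fin d → ℕ) (x : Fin d → ℝ) : ℝ :=
  ∏ s, hat (t s) (i s) (x s)

lemma hatfun_refine (u : ℝ) : max 0 (1 - |u|)
    = 1/2 * max 0 (1 - |2*u+1|) + max 0 (1 - |2*u|) + 1/2 * max 0 (1 - |2*u-1|) := by
  rcases le_total u (-1) with h | h
  · rw [max_eq_left, max_eq_left, max_eq_left, max_eq_left] <;>
      [skip; (rw [abs_of_nonpos (by linarith)]; linarith);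
       (rw [abs_of_nonpos (by linarith)]; linarith);
       (rw [abs_of_nonpos (by linarith)]; linarith);
       (rw [abs_of_nonpos (by linarith)]; linarith)]
    ring
  rcases le_total u (-1/2) with h2 | h2
  · rw [abs_of_nonpos (by linarith), abs_of_nonpos (by linarith),
      abs_of_nonpos (by linarith), abs_of_nonpos (by linarith),
      max_eq_right (by linarith), max_eq_right (by linarith),
      max_eq_left (by linarith), max_eq_left (by linarith)]
    ring
  rcases le_total u 0 with h3 | h3
  · rw [abs_of_nonpos (by linarith), abs_of_nonneg (by linarith),
      abs_of_nonpos (by linarith), abs_of_nonpos (by linarith),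
      max_eq_right (by linarith), max_eq_right (by linarith),
      max_eq_right (by linarith), max_eq_left (by linarith)]
    ring
  rcases le_total u (1/2) with h4 | h4
  · rw [abs_of_nonneg (by linarith), abs_of_nonneg (by linarith),
      abs_of_nonneg (by linarith), abs_of_nonpos (by linarith),
      max_eq_right (by linarith), max_eq_left (by linarith),
      max_eq_right (by linarith), max_eq_right (by linarith)]
    ring
  rcases le_total u 1 with h5 | h5
  · rw [abs_of_nonneg (by linarith), abs_of_nonneg (by linarith),
      abs_of_nonneg (by linarith), abs_of_nonneg (by linarith),
      max_eq_right (by linarith), max_eq_left (by linarith),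
      max_eq_left (by linarith), max_eq_right (by linarith)]
    ring
  · rw [abs_of_nonneg (by linarith), abs_of_nonneg (by linarith),
      abs_of_nonneg (by linarith), abs_of_nonneg (by linarith),
      max_eq_left (by linarith), max_eq_left (by linarith),
      max_eq_left (by linarith), max_eq_left (by linarith)]
    ring

lemma hat_refine (t k : ℕ) (x : ℝ) : hat t (k+1) x
    = 1/2 * hat (t+1) (2*k+1) x + hat (t+1) (2*k+2) x + 1/2 * hat (t+1) (2*k+3) x := by
  have key := hatfun_refine (x * 2 ^ (t+1) - (k+1 : ℝ))
  unfold hat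
  push_cast
  rw [show x * 2 ^ (t + 1 + 1) = 2 * (x * 2 ^ (t+1)) by ring]
  convert key using 4 <;> push_cast <;> ring

lemma two_le_pow (t : ℕ) : 2 ≤ 2 ^ (t+1) := by
  calc 2 = 2^1 := rfl
  _ ≤ 2^(t+1) := Nat.pow_le_pow_right (by norm_num) (by omega)

lemma mem_Idx {t i : ℕ} : i ∈ Idx t ↔ 1 ≤ i ∧ i ≤ 2^(t+1) - 1 := by
  simp [Idx]

lemma mem_Xi {t i : ℕ} : i ∈ Xi t ↔ Odd i ∧ 1 ≤ i ∧ i ≤ 2^(t+1) - 1 := by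
  unfold Xi
  split_ifs with h
  · subst h
    simp only [Finset.mem_singleton]
    constructor
    · rintro rfl; exact ⟨odd_one, le_refl 1, by norm_num⟩
    · rintro ⟨-, h1, h2⟩; norm_num at h2; omega
  · simp [Finset.mem_filter, mem_Idx, and_comm, and_assoc]

def SGhatSet (t : ℕ) : Set (ℝ → ℝ) := {f | ∃ t' ≤ t, ∃ i ∈ Xi t', f = hat t' i}
def SGprewSet (t : ℕ) : Set (ℝ → ℝ) := {f | ∃ t' ≤ t, ∃ i ∈ Xi t', f = prew t' i}
noncomputable def SGV (t : ℕ) : Submodule ℝ (ℝ → ℝ) :=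
  Submodule.span ℝ {f | ∃ i ∈ Idx t, f = hat t i}

lemma hat_mem_SGV {t i : ℕ} (hi : i ∈ Idx t) : hat t i ∈ SGV t :=
  Submodule.subset_span ⟨i, hi, rfl⟩

/-- refinement as a function identity -/
lemma hat_refine_fun (t k : ℕ) : hat t (k+1)
    = (1/2 : ℝ) • hat (t+1) (2*k+1) + hat (t+1) (2*k+2) + (1/2 : ℝ) • hat (t+1) (2*k+3) := by
  funext x
  simpa using hat_refine t k x

lemma SGV_mono_succ (t : ℕ) : SGV t ≤ SGV (t+1) := by
  rw [SGV, Submodule.span_le]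
  rintro f ⟨i, hi, rfl⟩
  rw [mem_Idx] at hi
  obtain ⟨k, rfl⟩ : ∃ k, i = k + 1 := ⟨i - 1, by omega⟩
  have h2 : 2 ≤ 2^(t+1) := two_le_pow t
  have h2' : 2^(t+1+1) = 2 * 2^(t+1) := by ring
  rw [hat_refine_fun]
  refine Submodule.add_mem _ (Submodule.add_mem _ (Submodule.smul_mem _ _ (hat_mem_SGV ?_))
    (hat_mem_SGV ?_)) (Submodule.smul_mem _ _ (hat_mem_SGV ?_))
  · rw [mem_Idx]; omega
  · rw [mem_Idx]; omega
  · rw [mem_Idx]; omega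

lemma SGV_mono {t t' : ℕ} (h : t' ≤ t) : SGV t' ≤ SGV t := by
  induction t with
  | zero => have : t' = 0 := by omega
            subst this; exact le_refl _
  | succ t IH =>
    rcases Nat.lt_or_ge t' (t+1) with h' | h'
    · exact le_trans (IH (by omega)) (SGV_mono_succ t)
    · have : t' = t + 1 := by omega
      subst this; exact le_refl _

lemma Xi_sub_Idx {t : ℕ} : Xi t ⊆ Idx t := by
  intro i hi; rw [mem_Xi] at hi; rw [mem_Idx]; exact hi.2

lemma spanA_eq_SGV (t : ℕ) : Submodule.span ℝ (SGhatSet t) = SGV t := by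
  induction t with
  | zero =>
    apply le_antisymm
    · rw [Submodule.span_le]
      rintro f ⟨t', ht', i, hi, rfl⟩
      interval_cases t'
      exact hat_mem_SGV (Xi_sub_Idx hi)
    · rw [SGV, Submodule.span_le]
      rintro f ⟨i, hi, rfl⟩
      rw [mem_Idx] at hi
      have : i = 1 := by norm_num at hi; omega
      subst this
      exact Submodule.subset_span ⟨0, le_refl 0, 1, by rw [mem_Xi]; exact ⟨odd_one, by norm_num⟩, rfl⟩
  | succ t IH =>
    have hAmono : SGhatSet t ⊆ SGhatSet (t+1) := by
      rintro f ⟨t', ht', i, hi, rfl⟩; exact ⟨t', by omega, i, hi, rfl⟩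
    apply le_antisymm
    · rw [Submodule.span_le]
      rintro f ⟨t', ht', i, hi, rfl⟩
      rcases Nat.lt_or_ge t' (t+1) with h' | h'
      · have : hat t' i ∈ Submodule.span ℝ (SGhatSet t) :=
          Submodule.subset_span ⟨t', by omega, i, hi, rfl⟩
        rw [IH] at this
        exact SGV_mono_succ t this
      · have : t' = t + 1 := by omega
        subst this
        exact hat_mem_SGV (Xi_sub_Idx hi)
    · rw [SGV, Submodule.span_le]
      rintro f ⟨j, hj, rfl⟩
      rw [mem_Idx] at hj
      have h2 : 2 ≤ 2^(t+1) := two_le_pow t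
      have h2' : 2^(t+1+1) = 2 * 2^(t+1) := by ring
      rcases Nat.even_or_odd j with he | ho
      · -- even
        obtain ⟨k, hk⟩ : ∃ k, j = 2*k + 2 := by
          obtain ⟨c, hc⟩ := he; exact ⟨c - 1, by omega⟩
        subst hk
        have hkI : k + 1 ∈ Idx t := by rw [mem_Idx]; omega
        have heq : hat (t+1) (2*k+2)
            = hat t (k+1) - (1/2 : ℝ) • hat (t+1) (2*k+1) - (1/2 : ℝ) • hat (t+1) (2*k+3) := by
          rw [hat_refine_fun t k]; abel
        rw [heq]
        have hmem : hat t (k+1) ∈ Submodule.span ℝ (SGhatSet (t+1)) := by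
          have : hat t (k+1) ∈ SGV t := hat_mem_SGV hkI
          rw [← IH] at this
          exact Submodule.span_mono hAmono this
        refine Submodule.sub_mem _ (Submodule.sub_mem _ hmem
            (Submodule.smul_mem _ _ (Submodule.subset_span
              ⟨t+1, le_refl _, 2*k+1, by rw [mem_Xi]; exact ⟨⟨k, by ring⟩, by omega, by omega⟩, rfl⟩)))
          (Submodule.smul_mem _ _ (Submodule.subset_span
            ⟨t+1, le_refl _, 2*k+3, by rw [mem_Xi]; exact ⟨⟨k+1, by ring⟩, by omega, by omega⟩, rfl⟩))
      · exact Submodule.subset_span ⟨t+1, le_refl _, j, by rw [mem_Xi]; exact ⟨ho, hj⟩, rfl⟩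
lemma prew_zero (i : ℕ) : prew 0 i = hat 0 1 := by
  funext x; simp [prew]

lemma prew_mem_SGV {t i : ℕ} (hi : i ∈ Xi t) : prew t i ∈ SGV t := by
  rcases Nat.eq_zero_or_pos t with rfl | ht
  · rw [prew_zero]
    exact hat_mem_SGV (by rw [mem_Idx]; norm_num)
  · have ht0 : t ≠ 0 := by omega
    rw [mem_Xi] at hi
    obtain ⟨hodd, h1, h2⟩ := hi
    have h4 : 4 ≤ 2^(t+1) := by
      calc 4 = 2^2 := rfl
      _ ≤ 2^(t+1) := Nat.pow_le_pow_right (by norm_num) (by omega)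
    obtain ⟨c, hc⟩ := hodd
    by_cases hone : i = 1
    · subst hone
      have : prew t 1 = (9/10 : ℝ) • hat t 1 - (3/5 : ℝ) • hat t 2 + (1/10 : ℝ) • hat t 3 := by
        funext x; simp [prew, ht0]
      rw [this]
      refine Submodule.add_mem _ (Submodule.sub_mem _ ?_ ?_) ?_ <;>
        exact Submodule.smul_mem _ _ (hat_mem_SGV (by rw [mem_Idx]; omega))
    · by_cases hlast : i = 2^(t+1) - 1
      · have : prew t i = (9/10 : ℝ) • hat t i - (3/5 : ℝ) • hat t (i-1) + (1/10 : ℝ) • hat t (i-2) := by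
          funext x
          rw [prew, if_neg ht0, if_neg hone, if_pos hlast]
          simp only [Pi.add_apply, Pi.sub_apply, Pi.smul_apply, smul_eq_mul]
        rw [this]
        refine Submodule.add_mem _ (Submodule.sub_mem _ ?_ ?_) ?_ <;>
          exact Submodule.smul_mem _ _ (hat_mem_SGV (by rw [mem_Idx]; omega))
      · have : prew t i = hat t i - (3/5 : ℝ) • (hat t (i+1) + hat t (i-1))
            + (1/10 : ℝ) • (hat t (i+2) + hat t (i-2)) := by
          funext x
          rw [prew, if_neg ht0, if_neg hone, if_neg hlast]
          simp only [Pi.add_apply, Pi.sub_apply, Pi.smul_apply, smul_eq_mul]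
        rw [this]
        have hle : i + 2 ≤ 2^(t+1) - 1 := by omega
        refine Submodule.add_mem _ (Submodule.sub_mem _ ?_ ?_) ?_
        · exact hat_mem_SGV (by rw [mem_Idx]; omega)
        all_goals exact Submodule.smul_mem _ _ (Submodule.add_mem _
          (hat_mem_SGV (by rw [mem_Idx]; omega)) (hat_mem_SGV (by rw [mem_Idx]; omega)))

lemma spanB_le_SGV (t : ℕ) : Submodule.span ℝ (SGprewSet t) ≤ SGV t := by
  rw [Submodule.span_le]
  rintro f ⟨t', ht', i, hi, rfl⟩
  exact SGV_mono ht' (prew_mem_SGV hi)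

lemma mem_span_of_matrix {ι : Type*} [Fintype ι] [DecidableEq ι] {F : Type*} [AddCommGroup F]
    [Module ℝ F] (M : Matrix ι ι ℝ) (hM : IsUnit M.det) {S : Submodule ℝ F} (h p : ι → F)
    (hp : ∀ m, p m ∈ S) (hmix : ∀ m, p m - ∑ k, M m k • h k ∈ S) (j : ι) : h j ∈ S := by
  have key : h j = ∑ k, M⁻¹ j k • p k - ∑ k, M⁻¹ j k • (p k - ∑ l, M k l • h l) := by
    rw [← Finset.sum_sub_distrib]
    have e1 : ∀ k, M⁻¹ j k • p k - M⁻¹ j k • (p k - ∑ l, M k l • h l)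
        = ∑ l, (M⁻¹ j k * M k l) • h l := by
      intro k
      rw [← smul_sub, sub_sub_cancel, Finset.smul_sum]
      simp_rw [smul_smul]
    rw [Finset.sum_congr rfl fun k _ => e1 k, Finset.sum_comm]
    have e2 : ∀ l, ∑ k, (M⁻¹ j k * M k l) • h l = ((M⁻¹ * M) j l) • h l := by
      intro l
      rw [← Finset.sum_smul, Matrix.mul_apply]
    rw [Finset.sum_congr rfl fun l _ => e2 l, Matrix.nonsing_inv_mul M hM]
    simp [Matrix.one_apply, ite_smul]
  rw [key]
  exact Submodule.sub_mem _ (Submodule.sum_smul_mem S _ fun k _ => hp k)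
    (Submodule.sum_smul_mem S _ fun k _ => hmix k)
noncomputable def cc (N : ℕ) : ℕ → ℕ → ℝ := fun a b =>
  if b = a then (if a = 0 ∨ a = N - 1 then 6/5 else 8/5)
  else if b = a + 1 ∨ b + 1 = a then 2/5 else 0

lemma cc_det (N : ℕ) (hN : 2 ≤ N) :
    IsUnit (Matrix.of (fun a b : Fin N => cc N (a : ℕ) (b : ℕ))).det := by
  rw [isUnit_iff_ne_zero]
  apply det_ne_zero_of_sum_row_lt_diag
  intro m
  have hsum : ∑ k ∈ Finset.univ.erase m, ‖Matrix.of (fun a b : Fin N => cc N (a : ℕ) (b : ℕ)) m k‖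
      ≤ 4/5 := by
    have hpt : ∀ k ∈ Finset.univ.erase m,
        ‖Matrix.of (fun a b : Fin N => cc N (a : ℕ) (b : ℕ)) m k‖
        ≤ (if (k : ℕ) = (m : ℕ) + 1 then (2/5 : ℝ) else 0)
          + (if (k : ℕ) = (m : ℕ) - 1 then (2/5 : ℝ) else 0) := by
      intro k hk
      have hne : (k : ℕ) ≠ (m : ℕ) := by
        have := Finset.ne_of_mem_erase hk
        exact fun hc => this (Fin.ext hc)
      rw [Matrix.of_apply, cc, if_neg hne, Real.norm_eq_abs]
      by_cases h1 : (k : ℕ) = (m : ℕ) + 1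
      · rw [if_pos (Or.inl h1), if_pos h1, if_neg (by omega)]
        rw [abs_of_nonneg] <;> norm_num
      · by_cases h2 : (k : ℕ) + 1 = (m : ℕ)
        · rw [if_pos (Or.inr h2), if_neg h1, if_pos (by omega)]
          rw [abs_of_nonneg] <;> norm_num
        · rw [if_neg (by tauto), if_neg h1, if_neg (by omega)]
          rw [abs_zero] <;> norm_num
    calc ∑ k ∈ Finset.univ.erase m, ‖Matrix.of (fun a b : Fin N => cc N (a : ℕ) (b : ℕ)) m k‖
        ≤ ∑ k ∈ Finset.univ.erase m, ((if (k : ℕ) = (m : ℕ) + 1 then (2/5 : ℝ) else 0)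
          + (if (k : ℕ) = (m : ℕ) - 1 then (2/5 : ℝ) else 0)) := Finset.sum_le_sum hpt
      _ ≤ ∑ k : Fin N, ((if (k : ℕ) = (m : ℕ) + 1 then (2/5 : ℝ) else 0)
          + (if (k : ℕ) = (m : ℕ) - 1 then (2/5 : ℝ) else 0)) := by
          apply Finset.sum_le_sum_of_subset_of_nonneg (Finset.erase_subset _ _)
          intro k _ _
          positivity
      _ ≤ 4/5 := by
          rw [Finset.sum_add_distrib]
          have b1 : ∀ (v : ℕ), ∑ k : Fin N, (if (k : ℕ) = v then (2/5 : ℝ) else 0) ≤ 2/5 := by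
            intro v
            rw [Fin.sum_univ_eq_sum_range (fun j => if j = v then (2/5 : ℝ) else 0) N,
              Finset.sum_ite_eq' (Finset.range N) v (fun _ => (2/5 : ℝ))]
            split_ifs <;> norm_num
          linarith [b1 ((m : ℕ) + 1), b1 ((m : ℕ) - 1)]
  have hdiag : (6/5 : ℝ) ≤ ‖Matrix.of (fun a b : Fin N => cc N (a : ℕ) (b : ℕ)) m m‖ := by
    rw [Matrix.of_apply, cc, if_pos rfl, Real.norm_eq_abs]
    split_ifs <;> rw [abs_of_pos (by norm_num)] <;> norm_num
  linarith

lemma fin_sum_reduce {F : Type*} [AddCommGroup F] [Module ℝ F] (N m : ℕ) (G : ℕ → F)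
    (s : Finset ℕ) (hsub : s ⊆ Finset.range N) (hz : ∀ k, k < N → k ∉ s → cc N m k = 0) :
    ∑ k : Fin N, cc N m (k : ℕ) • G (k : ℕ) = ∑ k ∈ s, cc N m k • G k := by
  rw [Fin.sum_univ_eq_sum_range (fun j => cc N m j • G j) N]
  exact (Finset.sum_subset hsub (fun x hx hnx => by
    rw [hz x (Finset.mem_range.mp hx) hnx, zero_smul])).symm
lemma key_row (t m : ℕ) (hm : m < 2^(t+1)) :
    prew (t+1) (2*m+1) - ∑ k : Fin (2^(t+1)), cc (2^(t+1)) m (k:ℕ) • hat (t+1) (2*(k:ℕ)+1)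
      ∈ SGV t := by
  have hN : 2 ≤ 2^(t+1) := two_le_pow t
  have hpow : 2^(t+1+1) = 2*2^(t+1) := by ring
  have htne : t + 1 ≠ 0 := Nat.succ_ne_zero t
  set N := 2^(t+1) with hNdef
  rcases Nat.eq_zero_or_pos m with rfl | hm1
  · -- boundary m = 0
    have hred : ∑ k : Fin N, cc N 0 (k:ℕ) • hat (t+1) (2*(k:ℕ)+1)
        = cc N 0 0 • hat (t+1) (2*0+1) + cc N 0 1 • hat (t+1) (2*1+1) := by
      rw [fin_sum_reduce N 0 (fun j => hat (t+1) (2*j+1)) {0,1}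
        (by intro x hx; simp only [Finset.mem_insert, Finset.mem_singleton] at hx;
            rw [Finset.mem_range]; omega)
        (by intro k hk hks; simp only [Finset.mem_insert, Finset.mem_singleton, not_or] at hks;
            rw [cc, if_neg (by omega), if_neg (by omega)])]
      rw [Finset.sum_insert (by norm_num), Finset.sum_singleton]
    rw [hred]
    have hc00 : cc N 0 0 = 6/5 := by rw [cc, if_pos rfl, if_pos (Or.inl rfl)]
    have hc01 : cc N 0 1 = 2/5 := by rw [cc, if_neg (by omega), if_pos (by omega)]
    rw [hc00, hc01]
    have heq : prew (t+1) (2*0+1) - ((6/5:ℝ) • hat (t+1) (2*0+1) + (2/5:ℝ) • hat (t+1) (2*1+1))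
        = (-(3/5) : ℝ) • hat t 1 := by
      funext x
      have hr := hat_refine t 0 x
      rw [show 2*0+1 = 1 by ring, show 2*0+2 = 2 by ring, show 2*0+3 = 3 by ring] at hr
      have hp : prew (t+1) (2*0+1) x
          = 9/10 * hat (t+1) 1 x - 3/5 * hat (t+1) 2 x + 1/10 * hat (t+1) 3 x := by
        rw [show 2*0+1 = 1 by ring, prew, if_neg htne, if_pos rfl]
      simp only [Pi.sub_apply, Pi.add_apply, Pi.smul_apply, smul_eq_mul, hp,
        show 2*0+1 = 1 by ring, show 2*1+1 = 3 by ring]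
      linarith
    rw [heq]
    exact Submodule.smul_mem _ _ (hat_mem_SGV (by rw [mem_Idx]; omega))
  · rcases eq_or_ne m (N-1) with hmN | hmN
    · -- boundary m = N-1
      obtain ⟨K, hK⟩ : ∃ K, N = K + 2 := ⟨N - 2, by omega⟩
      have hmK : m = K + 1 := by omega
      subst hmK
      have hred : ∑ k : Fin N, cc N (K+1) (k:ℕ) • hat (t+1) (2*(k:ℕ)+1)
          = cc N (K+1) K • hat (t+1) (2*K+1) + cc N (K+1) (K+1) • hat (t+1) (2*(K+1)+1) := by
        rw [fin_sum_reduce N (K+1) (fun j => hat (t+1) (2*j+1)) {K, K+1}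
          (by intro x hx; simp only [Finset.mem_insert, Finset.mem_singleton] at hx;
              rw [Finset.mem_range]; omega)
          (by intro k hk hks; simp only [Finset.mem_insert, Finset.mem_singleton, not_or] at hks;
              rw [cc, if_neg (by omega), if_neg (by omega)])]
        rw [Finset.sum_insert (by simp), Finset.sum_singleton]
      rw [hred]
      have hcK : cc N (K+1) K = 2/5 := by rw [cc, if_neg (by omega), if_pos (by omega)]
      have hcKK : cc N (K+1) (K+1) = 6/5 := by rw [cc, if_pos rfl, if_pos (by omega)]
      rw [hcK, hcKK]
      have heq : prew (t+1) (2*(K+1)+1)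
          - ((2/5:ℝ) • hat (t+1) (2*K+1) + (6/5:ℝ) • hat (t+1) (2*(K+1)+1))
          = (-(3/5) : ℝ) • hat t (K+1) := by
        funext x
        have hr := hat_refine t K x
        have hp : prew (t+1) (2*K+3) x
            = 9/10 * hat (t+1) (2*K+3) x - 3/5 * hat (t+1) (2*K+2) x
              + 1/10 * hat (t+1) (2*K+1) x := by
          rw [prew, if_neg htne, if_neg (by omega),
            if_pos (by omega), show 2*K+3-1 = 2*K+2 by omega, show 2*K+3-2 = 2*K+1 by omega]
        simp only [Pi.sub_apply, Pi.add_apply, Pi.smul_apply, smul_eq_mul, hp,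
          show 2*(K+1)+1 = 2*K+3 by ring]
        linarith
      rw [heq]
      exact Submodule.smul_mem _ _ (hat_mem_SGV (by rw [mem_Idx]; omega))
    · -- interior
      obtain ⟨k, hk⟩ : ∃ k, m = k + 1 := ⟨m - 1, by omega⟩
      subst hk
      have hkN : k + 1 ≤ N - 2 := by omega
      have hred : ∑ l : Fin N, cc N (k+1) (l:ℕ) • hat (t+1) (2*(l:ℕ)+1)
          = cc N (k+1) k • hat (t+1) (2*k+1) + cc N (k+1) (k+1) • hat (t+1) (2*(k+1)+1)
            + cc N (k+1) (k+2) • hat (t+1) (2*(k+2)+1) := by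
        rw [fin_sum_reduce N (k+1) (fun j => hat (t+1) (2*j+1)) {k, k+1, k+2}
          (by intro x hx;
              simp only [Finset.mem_insert, Finset.mem_singleton] at hx;
              rw [Finset.mem_range]; omega)
          (by intro l hl hls; simp only [Finset.mem_insert, Finset.mem_singleton, not_or] at hls;
              rw [cc, if_neg (by omega), if_neg (by omega)])]
        rw [Finset.sum_insert (by simp), Finset.sum_insert (by simp), Finset.sum_singleton]
        ring
      rw [hred]
      have hc1 : cc N (k+1) k = 2/5 := by rw [cc, if_neg (by omega), if_pos (by omega)]
      have hc2 : cc N (k+1) (k+1) = 8/5 := by rw [cc, if_pos rfl, if_neg (by omega)]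
      have hc3 : cc N (k+1) (k+2) = 2/5 := by rw [cc, if_neg (by omega), if_pos (by omega)]
      rw [hc1, hc2, hc3]
      have heq : prew (t+1) (2*(k+1)+1)
          - ((2/5:ℝ) • hat (t+1) (2*k+1) + (8/5:ℝ) • hat (t+1) (2*(k+1)+1)
            + (2/5:ℝ) • hat (t+1) (2*(k+2)+1))
          = (-(3/5) : ℝ) • hat t (k+1) + (-(3/5) : ℝ) • hat t (k+2) := by
        funext x
        have hr1 := hat_refine t k x
        have hr2 := hat_refine t (k+1) x
        rw [show 2*(k+1)+1 = 2*k+3 by ring, show 2*(k+1)+2 = 2*k+4 by ring,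
          show 2*(k+1)+3 = 2*k+5 by ring, show k+1+1 = k+2 by ring] at hr2
        have hp : prew (t+1) (2*k+3) x
            = hat (t+1) (2*k+3) x - 3/5 * (hat (t+1) (2*k+4) x + hat (t+1) (2*k+2) x)
              + 1/10 * (hat (t+1) (2*k+5) x + hat (t+1) (2*k+1) x) := by
          rw [prew, if_neg htne, if_neg (by omega),
            if_neg (by omega), show 2*k+3+1 = 2*k+4 by ring, show 2*k+3-1 = 2*k+2 by omega,
            show 2*k+3+2 = 2*k+5 by ring, show 2*k+3-2 = 2*k+1 by omega]
        simp only [Pi.sub_apply, Pi.add_apply, Pi.smul_apply, smul_eq_mul, hp,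
          show 2*(k+1)+1 = 2*k+3 by ring, show 2*(k+2)+1 = 2*k+5 by ring]
        linarith
      rw [heq]
      exact Submodule.add_mem _
        (Submodule.smul_mem _ _ (hat_mem_SGV (by rw [mem_Idx]; omega)))
        (Submodule.smul_mem _ _ (hat_mem_SGV (by rw [mem_Idx]; omega)))
lemma SGprew_mono {t : ℕ} : SGprewSet t ⊆ SGprewSet (t+1) := by
  rintro f ⟨t', ht', i, hi, rfl⟩; exact ⟨t', by omega, i, hi, rfl⟩

lemma spanA_le_spanB (t : ℕ) :
    Submodule.span ℝ (SGhatSet t) ≤ Submodule.span ℝ (SGprewSet t) := by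
  induction t with
  | zero =>
    rw [Submodule.span_le]
    rintro f ⟨t', ht', i, hi, rfl⟩
    interval_cases t'
    rw [mem_Xi] at hi
    have hione : i = 1 := by norm_num at hi; omega
    subst hione
    rw [show hat 0 1 = prew 0 1 from (prew_zero 1).symm]
    exact Submodule.subset_span ⟨0, le_refl 0, 1, by rw [mem_Xi]; exact ⟨odd_one, by norm_num⟩, rfl⟩
  | succ t IH =>
    rw [Submodule.span_le]
    rintro f ⟨t', ht', i, hi, rfl⟩
    rcases Nat.lt_or_ge t' (t+1) with h' | h'
    · exact Submodule.span_mono SGprew_mono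
        (IH (Submodule.subset_span ⟨t', by omega, i, hi, rfl⟩))
    · have ht'' : t' = t+1 := by omega
      subst ht''
      have hN : 2 ≤ 2^(t+1) := two_le_pow t
      have hpow : 2^(t+1+1) = 2*2^(t+1) := by ring
      rw [mem_Xi] at hi
      obtain ⟨⟨c, hc⟩, h1, h2⟩ := hi
      have hm : c < 2^(t+1) := by omega
      have hi2 : i = 2*c+1 := by omega
      subst hi2
      have hVB : SGV t ≤ Submodule.span ℝ (SGprewSet (t+1)) := by
        rw [← spanA_eq_SGV]
        exact le_trans IH (Submodule.span_mono SGprew_mono)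
      have key := mem_span_of_matrix
        (Matrix.of (fun a b : Fin (2^(t+1)) => cc (2^(t+1)) (a:ℕ) (b:ℕ)))
        (cc_det (2^(t+1)) hN)
        (S := Submodule.span ℝ (SGprewSet (t+1)))
        (fun k : Fin (2^(t+1)) => hat (t+1) (2*(k:ℕ)+1))
        (fun k : Fin (2^(t+1)) => prew (t+1) (2*(k:ℕ)+1))
        (fun k => Submodule.subset_span ⟨t+1, le_refl _, 2*(k:ℕ)+1,
          by rw [mem_Xi]; exact ⟨⟨(k:ℕ), by ring⟩, by omega, by have := k.isLt; omega⟩, rfl⟩)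
        (fun k => hVB (key_row t (k:ℕ) k.isLt))
        ⟨c, hm⟩
      exact key

lemma hat_mem_spanB {t i : ℕ} (hi : i ∈ Xi t) : hat t i ∈ Submodule.span ℝ (SGprewSet t) :=
  spanA_le_spanB t (Submodule.subset_span ⟨t, le_refl t, i, hi, rfl⟩)

lemma prew_mem_spanA {t i : ℕ} (hi : i ∈ Xi t) : prew t i ∈ Submodule.span ℝ (SGhatSet t) := by
  rw [spanA_eq_SGV]; exact prew_mem_SGV hi
lemma tensor_mem_span {d : ℕ} (G : Fin d → Set (ℝ → ℝ)) (f : Fin d → (ℝ → ℝ))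
    (S : Finset (Fin d)) (hf : ∀ s, f s ∈ Submodule.span ℝ (G s)) :
    (fun x : Fin d → ℝ => ∏ s ∈ S, f s (x s)) ∈ Submodule.span ℝ
      {g : (Fin d → ℝ) → ℝ | ∃ c : Fin d → (ℝ → ℝ),
        (∀ s ∈ S, c s ∈ G s) ∧ g = fun x => ∏ s ∈ S, c s (x s)} := by
  classical
  induction S using Finset.induction_on with
  | empty => exact Submodule.subset_span ⟨f, by simp, rfl⟩
  | @insert a s ha IH =>
    have main : ∀ u, u ∈ Submodule.span ℝ (G a) → ∀ v, v ∈ Submodule.span ℝ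
        {g : (Fin d → ℝ) → ℝ | ∃ c : Fin d → (ℝ → ℝ),
          (∀ s' ∈ s, c s' ∈ G s') ∧ g = fun x => ∏ s' ∈ s, c s' (x s')} →
        (fun x : Fin d → ℝ => u (x a) * v x) ∈ Submodule.span ℝ
          {g : (Fin d → ℝ) → ℝ | ∃ c : Fin d → (ℝ → ℝ),
            (∀ s' ∈ insert a s, c s' ∈ G s') ∧ g = fun x => ∏ s' ∈ insert a s, c s' (x s')} := by
      intro u hu
      induction hu using Submodule.span_induction with
      | mem g hg =>
        intro v hv
        induction hv using Submodule.span_induction with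
        | mem w hw =>
          obtain ⟨c, hcmem, rfl⟩ := hw
          refine Submodule.subset_span ⟨Function.update c a g, ?_, ?_⟩
          · intro s' hs'
            rcases Finset.mem_insert.mp hs' with rfl | hs'
            · rw [Function.update_self]; exact hg
            · rw [Function.update_of_ne (by intro h; exact ha (h ▸ hs'))]; exact hcmem s' hs'
          · funext x
            rw [Finset.prod_insert ha, Function.update_self]
            exact congrArg (g (x a) * ·) (Finset.prod_congr rfl fun s' hs' => by
              rw [Function.update_of_ne (by intro h; exact ha (h ▸ hs'))])
        | zero =>
          have hz : (fun x : Fin d → ℝ => g (x a) * (0 : (Fin d → ℝ) → ℝ) x)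
              = (0 : (Fin d → ℝ) → ℝ) := by funext x; simp
          rw [hz]; exact Submodule.zero_mem _
        | add v w hv hw h1 h2 =>
          have hz : (fun x : Fin d → ℝ => g (x a) * (v + w) x)
              = (fun x : Fin d → ℝ => g (x a) * v x) + (fun x => g (x a) * w x) := by
            funext x; simp [mul_add]
          rw [hz]; exact Submodule.add_mem _ h1 h2
        | smul r v hv h1 =>
          have hz : (fun x : Fin d → ℝ => g (x a) * (r • v) x)
              = r • (fun x : Fin d → ℝ => g (x a) * v x) := by
            funext x; simp; ring
          rw [hz]; exact Submodule.smul_mem _ _ h1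
      | zero =>
        intro v hv
        have hz : (fun x : Fin d → ℝ => (0 : ℝ → ℝ) (x a) * v x)
            = (0 : (Fin d → ℝ) → ℝ) := by funext x; simp
        rw [hz]; exact Submodule.zero_mem _
      | add u w hu hw h1 h2 =>
        intro v hv
        have hz : (fun x : Fin d → ℝ => (u + w) (x a) * v x)
            = (fun x : Fin d → ℝ => u (x a) * v x) + (fun x => w (x a) * v x) := by
          funext x; simp [add_mul]
        rw [hz]; exact Submodule.add_mem _ (h1 v hv) (h2 v hv)
      | smul r u hu h1 =>
        intro v hv
        have hz : (fun x : Fin d → ℝ => (r • u) (x a) * v x)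
            = r • (fun x : Fin d → ℝ => u (x a) * v x) := by
          funext x; simp; ring
        rw [hz]; exact Submodule.smul_mem _ _ (h1 v hv)
    have hprod : (fun x : Fin d → ℝ => ∏ s' ∈ insert a s, f s' (x s'))
        = fun x : Fin d → ℝ => f a (x a) * ∏ s' ∈ s, f s' (x s') := by
      funext x; exact Finset.prod_insert ha
    rw [hprod]
    exact main (f a) (hf a) _ IH

/-- The sparse grid spaces generated by nodal hierarchical functions and by
pre-wavelets coincide:
`span{v^{lin}_{t,i} : |t| ≤ n, i ∈ Ξ_t} = span{φ_{t,i} : |t| ≤ n, i ∈ Ξ_t}`. -/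
theorem sparse_spaces_coincide (d n : ℕ) :
    Submodule.span ℝ
      {f : (Fin d → ℝ) → ℝ | ∃ t i : Fin d → ℕ,
        (∑ s, t s) ≤ n ∧ (∀ s, i s ∈ Xi (t s)) ∧ f = that d t i} =
    Submodule.span ℝ
      {f : (Fin d → ℝ) → ℝ | ∃ t i : Fin d → ℕ,
        (∑ s, t s) ≤ n ∧ (∀ s, i s ∈ Xi (t s)) ∧ f = tprew d t i} := by
  apply le_antisymm
  · rw [Submodule.span_le]
    rintro f ⟨t, i, htn, hi, rfl⟩
    have h1 := tensor_mem_span (fun s => SGprewSet (t s)) (fun s => hat (t s) (i s))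
      Finset.univ (fun s => hat_mem_spanB (hi s))
    have h2 : {g : (Fin d → ℝ) → ℝ | ∃ c : Fin d → (ℝ → ℝ),
          (∀ s ∈ Finset.univ, c s ∈ SGprewSet (t s)) ∧ g = fun x => ∏ s, c s (x s)}
        ⊆ {f : (Fin d → ℝ) → ℝ | ∃ t' i' : Fin d → ℕ,
          (∑ s, t' s) ≤ n ∧ (∀ s, i' s ∈ Xi (t' s)) ∧ f = tprew d t' i'} := by
      rintro g ⟨c, hc, rfl⟩
      choose t' ht' j hj hcj using fun s => hc s (Finset.mem_univ s)
      refine ⟨t', j, le_trans (Finset.sum_le_sum fun s _ => ht' s) htn, hj, ?_⟩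
      funext x
      show ∏ s, c s (x s) = ∏ s, prew (t' s) (j s) (x s)
      exact Finset.prod_congr rfl fun s _ => by rw [hcj s]
    exact Submodule.span_mono h2 h1
  · rw [Submodule.span_le]
    rintro f ⟨t, i, htn, hi, rfl⟩
    have h1 := tensor_mem_span (fun s => SGhatSet (t s)) (fun s => prew (t s) (i s))
      Finset.univ (fun s => prew_mem_spanA (hi s))
    have h2 : {g : (Fin d → ℝ) → ℝ | ∃ c : Fin d → (ℝ → ℝ),
          (∀ s ∈ Finset.univ, c s ∈ SGhatSet (t s)) ∧ g = fun x => ∏ s, c s (x s)}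
        ⊆ {f : (Fin d → ℝ) → ℝ | ∃ t' i' : Fin d → ℕ,
          (∑ s, t' s) ≤ n ∧ (∀ s, i' s ∈ Xi (t' s)) ∧ f = that d t' i'} := by
      rintro g ⟨c, hc, rfl⟩
      choose t' ht' j hj hcj using fun s => hc s (Finset.mem_univ s)
      refine ⟨t', j, le_trans (Finset.sum_le_sum fun s _ => ht' s) htn, hj, ?_⟩
      funext x
      show ∏ s, c s (x s) = ∏ s, hat (t' s) (j s) (x s)
      exact Finset.prod_congr rfl fun s _ => by rw [hcj s]
    exact Submodule.span_mono h2 h1
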